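/- Let R, R' and U be TRSs over a signature Σ and let T be a set of ground terms such that SN_T(U/(R ∪ R')) holds. Let A = (A,[[·]]_A,≥) be a monotone partial model for R ∪ R' ∪ U with T ⊆ L(A), and let B = (B,[[·]]_B,≻,⊒) be an extended well-founded ν-monotone Σ_lab-algebra, where ν is the replacement map on Σ_lab given by ν(f^{(a₁,…,aₙ)}) = {1,…,n} \ {i : aᵢ ∈ NF_A(R ∪ R')}, such that: (1) (B,≻) is a model for lab_A(R'); (2) (B,⊒) is a model for lab_A(R); and (3) for all f ∈ Σ, all tuples a⃗₁ a a⃗₂ and a⃗₁ a' a⃗₂ in A^{ar(f)} with a ≥ a' and both labelled symbols in Σ_lab, and all b₁,…,b_{ar(f)} ∈ B, one has [[f^{a⃗₁ a a⃗₂}]]_B(b₁,…,b_{ar(f)}) ⊒ [[f^{a⃗₁ a' a⃗₂}]]_B(b₁,…,b_{ar(f)}). Then SN_T((U ∪ R')/R) holds. -/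

import Mathlib

namespace LocalTerm

/-- Terms over a signature `F` with arities `ar` and variables `X`. -/
inductive Tm (F : Type) (ar : F → ℕ) (X : Type) : Type
  | var : X → Tm F ar X
  | app : (f : F) → (Fin (ar f) → Tm F ar X) → Tm F ar X

/-- Substitution. -/
def subst {F : Type} {ar : F → ℕ} {X Y : Type} (σ : X → Tm F ar Y) :
    Tm F ar X → Tm F ar Y
  | .var x => σ x
  | .app f ts => .app f fun i => subst σ (ts i)

/-- One-step rewrite relation of a set `R` of rules (over variables `X`),
acting on terms over variables `V`: a rule instance inside a one-hole context. -/
inductive Rw {F : Type} {ar : F → ℕ} {X V : Type}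
    (R : Set (Tm F ar X × Tm F ar X)) : Tm F ar V → Tm F ar V → Prop
  | rule {l r : Tm F ar X} (h : (l, r) ∈ R) (σ : X → Tm F ar V) :
      Rw R (subst σ l) (subst σ r)
  | ctxt {f : F} {ts : Fin (ar f) → Tm F ar V} (i : Fin (ar f)) {t' : Tm F ar V} :
      Rw R (ts i) t' → Rw R (Tm.app f ts) (Tm.app f (Function.update ts i t'))

/-- The set of variables of a term. -/
def Vars {F : Type} {ar : F → ℕ} {X : Type} : Tm F ar X → Set X
  | .var x => {x}
  | .app _ ts => ⋃ i, Vars (ts i)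

/-- `R` is a TRS: no left-hand side is a variable,
and all variables of a right-hand side occur in the left-hand side. -/
def IsTRS {F : Type} {ar : F → ℕ} {X : Type}
    (R : Set (Tm F ar X × Tm F ar X)) : Prop :=
  ∀ p ∈ R, (∀ x : X, p.1 ≠ Tm.var x) ∧ Vars p.2 ⊆ Vars p.1

/-- A partial interpretation of the function symbols in a set `A`:
for every `n`-ary symbol a partial function `Aⁿ ⇀ A`. -/
abbrev Interp (F : Type) (ar : F → ℕ) (A : Type) : Type :=
  ∀ f : F, (Fin (ar f) → A) → Option A

/-- `Eval I α t a` : the (partial) interpretation of `t` under assignment `α`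
is defined and equal to `a`. -/
inductive Eval {F : Type} {ar : F → ℕ} {X A : Type}
    (I : Interp F ar A) (α : X → A) : Tm F ar X → A → Prop
  | var (x : X) : Eval I α (Tm.var x) (α x)
  | app {f : F} {ts : Fin (ar f) → Tm F ar X} (as : Fin (ar f) → A) {a : A}
      (hts : ∀ i, Eval I α (ts i) (as i)) (hI : I f as = some a) :
      Eval I α (Tm.app f ts) a

/-- A set `T` of ground terms is defined if the interpretation of
every `t ∈ T` is defined. -/
def DefinedOn {F : Type} {ar : F → ℕ} {A : Type}
    (I : Interp F ar A) (T : Set (Tm F ar Empty)) : Prop :=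
  ∀ t ∈ T, ∃ a : A, Eval I Empty.elim t a

/-- `succ` is a partial model for `R`: whenever the interpretation of a
left-hand side is defined, the right-hand side is defined as well and the
interpretations are related by `succ`. -/
def PartialModel {F : Type} {ar : F → ℕ} {X A : Type}
    (I : Interp F ar A) (succ : A → A → Prop)
    (R : Set (Tm F ar X × Tm F ar X)) : Prop :=
  ∀ p ∈ R, ∀ (α : X → A) (a : A), Eval I α p.1 a →
    ∃ b : A, Eval I α p.2 b ∧ succ a b

/-- A partial function is closed w.r.t. a relation. -/
def ClosedFn {A : Type} {n : ℕ} (g : (Fin n → A) → Option A)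
    (r : A → A → Prop) : Prop :=
  ∀ (v : Fin n → A) (i : Fin n) (b : A), r (v i) b → (g v).isSome →
    (g (Function.update v i b)).isSome

/-- A partial function is monotone w.r.t. a relation. -/
def MonoFn {A : Type} {n : ℕ} (g : (Fin n → A) → Option A)
    (r : A → A → Prop) : Prop :=
  ∀ (v : Fin n → A) (i : Fin n) (b : A) (x y : A), r (v i) b →
    g v = some x → g (Function.update v i b) = some y → r x y

/-- `(A, I, r)` is a monotone partial algebra: every interpretation is
closed and monotone with respect to `r`. -/
def MonoAlg {F : Type} {ar : F → ℕ} {A : Type}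
    (I : Interp F ar A) (r : A → A → Prop) : Prop :=
  ∀ f : F, ClosedFn (I f) r ∧ MonoFn (I f) r

/-- Well-foundedness: no infinite descending sequence. -/
def WFrel {A : Type} (r : A → A → Prop) : Prop :=
  ¬ ∃ f : ℕ → A, ∀ n : ℕ, r (f n) (f (n + 1))

/-- `r` is terminating on `T`: no element of `T` starts an infinite `r`-sequence. -/
def SNon {B : Type} (r : B → B → Prop) (T : Set B) : Prop :=
  ∀ t ∈ T, ¬ ∃ f : ℕ → B, f 0 = t ∧ ∀ n : ℕ, r (f n) (f (n + 1))

/-- Relative termination on `T`: no element of `T` starts an infinite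
`(r ∪ s)`-sequence containing infinitely many `r`-steps. -/
def SNrelOn {B : Type} (r s : B → B → Prop) (T : Set B) : Prop :=
  ∀ t ∈ T, ¬ ∃ f : ℕ → B, f 0 = t ∧
    (∀ n : ℕ, r (f n) (f (n + 1)) ∨ s (f n) (f (n + 1))) ∧
    (∀ m : ℕ, ∃ n : ℕ, m ≤ n ∧ r (f n) (f (n + 1)))

/-- Relative termination (on everything). -/
def SNrel {B : Type} (r s : B → B → Prop) : Prop := SNrelOn r s Set.univ


/-- The labelled signature: symbols `f` together with a tuple of labels `λ`
such that `I f λ` is defined. -/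
def FlabT {F : Type} {ar : F → ℕ} {A : Type} (I : Interp F ar A) : Type :=
  {p : Σ f : F, Fin (ar f) → A // (I p.1 p.2).isSome}

/-- Arity of labelled symbols. -/
def arLab {F : Type} {ar : F → ℕ} {A : Type} (I : Interp F ar A) :
    FlabT I → ℕ :=
  fun p => ar p.1.1

/-- `Lab I α t t'` : `t'` is the labelling of `t` with respect to the
assignment `α` (defined whenever the interpretation of `t` is defined): each
symbol gets labelled by the tuple of the values of its arguments. -/
inductive Lab {F : Type} {ar : F → ℕ} {X A : Type}
    (I : Interp F ar A) (α : X → A) :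
    Tm F ar X → Tm (FlabT I) (arLab I) X → Prop
  | var (x : X) : Lab I α (Tm.var x) (Tm.var x)
  | app {f : F} {ts : Fin (ar f) → Tm F ar X} (as : Fin (ar f) → A)
      (h : (I f as).isSome) (ts' : Fin (ar f) → Tm (FlabT I) (arLab I) X)
      (hev : ∀ i, Eval I α (ts i) (as i))
      (hlab : ∀ i, Lab I α (ts i) (ts' i)) :
      Lab I α (Tm.app f ts) (Tm.app ⟨⟨f, as⟩, h⟩ ts')

/-- The labelled TRS `lab_A(R)`: all labellings of rules of `R` under
assignments for which the left-hand side is defined. -/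
def labTRS {F : Type} {ar : F → ℕ} {X A : Type}
    (I : Interp F ar A) (R : Set (Tm F ar X × Tm F ar X)) :
    Set (Tm (FlabT I) (arLab I) X × Tm (FlabT I) (arLab I) X) :=
  {q | ∃ p ∈ R, ∃ α : X → A, (∃ a : A, Eval I α p.1 a) ∧
        Lab I α p.1 q.1 ∧ Lab I α p.2 q.2}

/-- The core of a partial algebra: the smallest subset closed under all
defined applications of the interpretations. -/
inductive InCore {F : Type} {ar : F → ℕ} {A : Type}
    (I : Interp F ar A) : A → Prop
  | mk {f : F} (as : Fin (ar f) → A) {a : A} :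
      (∀ i, InCore I (as i)) → I f as = some a → InCore I a

/-- The complement (within the core) of the set of normal forms `NF_A(R)`:
the smallest set containing the interpretations of left-hand sides (under
core-valued assignments) and closed under defined applications of the
interpretations with core arguments. -/
inductive NotNF {F : Type} {ar : F → ℕ} {X A : Type}
    (I : Interp F ar A) (R : Set (Tm F ar X × Tm F ar X)) : A → Prop
  | lhs {p : Tm F ar X × Tm F ar X} (hp : p ∈ R) (α : X → A)
      (hα : ∀ x : X, InCore I (α x)) {a : A} (h : Eval I α p.1 a) :
      NotNF I R a
  | up {f : F} (as : Fin (ar f) → A) (i : Fin (ar f)) {a : A} :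
      (∀ j, InCore I (as j)) → NotNF I R (as i) → I f as = some a →
      NotNF I R a

/-- The normal forms `NF_A(R)` of the partial algebra: the largest subset of
the core avoiding interpretations of left-hand sides and closed accordingly. -/
def NFset {F : Type} {ar : F → ℕ} {X A : Type}
    (I : Interp F ar A) (R : Set (Tm F ar X × Tm F ar X)) : Set A :=
  {a : A | InCore I a ∧ ¬ NotNF I R a}

/-- Interpretation of terms in a total algebra. -/
def evalT {F : Type} {ar : F → ℕ} {X B : Type}
    (J : ∀ f : F, (Fin (ar f) → B) → B) (β : X → B) : Tm F ar X → B
  | .var x => β x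
  | .app f ts => J f fun i => evalT J β (ts i)

/-- `(B, J, r)` is a (total) model for `R`. -/
def TModel {F : Type} {ar : F → ℕ} {X B : Type}
    (J : ∀ f : F, (Fin (ar f) → B) → B) (r : B → B → Prop)
    (R : Set (Tm F ar X × Tm F ar X)) : Prop :=
  ∀ p ∈ R, ∀ β : X → B, r (evalT J β p.1) (evalT J β p.2)

/-- `μ`-monotonicity of a total algebra w.r.t. a replacement map `μ`. -/
def MuMono {F : Type} {ar : F → ℕ} {B : Type}
    (J : ∀ f : F, (Fin (ar f) → B) → B) (μ : ∀ f : F, Set (Fin (ar f)))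
    (r : B → B → Prop) : Prop :=
  ∀ (f : F) (i : Fin (ar f)), i ∈ μ f → ∀ (v : Fin (ar f) → B) (b : B),
    r (v i) b → r (J f v) (J f (Function.update v i b))

/-- The replacement map `ν` on the labelled signature: all argument positions
except those whose label belongs to `NF_A(R)`. -/
def nuMap {F : Type} {ar : F → ℕ} {X A : Type}
    (I : Interp F ar A) (R : Set (Tm F ar X × Tm F ar X)) :
    ∀ p : FlabT I, Set (Fin (arLab I p)) :=
  fun p => {i : Fin (arLab I p) | p.1.2 i ∉ NFset I R}

/-!
Along a rewrite sequence the interpretations in `A` stay defined and decrease, so every term of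
an infinite `(U ∪ R')/R`-sequence from `T` can be labelled. If `U`-steps occur infinitely often this
contradicts `SN_T(U/(R ∪ R'))`. Otherwise, from some point on, every `R'`-step maps the labelled
terms to a `≻ ⊒*`-step of `B` and every `R`-step to a `⊒*`-step: at the root by the model
conditions (1), (2), and below a symbol by `ν`-monotonicity (the value of a rewritten argument is
never a normal form of `A`, so its position is active) followed by condition (3), which absorbs the
change of label above the rewritten position. Flattening this chain contradicts `SN(≻/⊒)`.
-/

theorem forall_update_update {ι α β : Type*} [DecidableEq ι] {p : α → β → Prop}
    {f : ι → α} {g : ι → β} {i : ι} {a : α} {b : β} (h : ∀ j, p (f j) (g j)) (hi : p a b) :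
    ∀ j, p (Function.update f i a j) (Function.update g i b j) := by
  intro j
  rcases eq_or_ne j i with rfl | hj
  · simpa using hi
  · simpa [hj] using h j

section Rewriting

variable {F X V : Type} {ar : F → ℕ}

theorem Rw.mono {S₁ S₂ : Set (Tm F ar X × Tm F ar X)} (h : S₁ ⊆ S₂) {t s : Tm F ar V}
    (hts : Rw S₁ t s) : Rw S₂ t s := by
  induction hts with
  | rule hp σ => exact .rule (h hp) σ
  | ctxt i _ ih => exact .ctxt i ih

theorem rw_union_iff {S₁ S₂ : Set (Tm F ar X × Tm F ar X)} {t s : Tm F ar V} :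
    Rw (S₁ ∪ S₂) t s ↔ Rw S₁ t s ∨ Rw S₂ t s := by
  refine ⟨fun h => ?_, fun h => h.elim (Rw.mono Set.subset_union_left)
    (Rw.mono Set.subset_union_right)⟩
  induction h with
  | rule hp σ => exact hp.imp (.rule · σ) (.rule · σ)
  | ctxt i _ ih => exact ih.imp (.ctxt i) (.ctxt i)

end Rewriting

section Evaluation

variable {F X Y A : Type} {ar : F → ℕ} {I : Interp F ar A}

theorem Eval.unique {α : Y → A} {t : Tm F ar Y} {a b : A} (ha : Eval I α t a)
    (hb : Eval I α t b) : a = b := by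
  induction ha generalizing b with
  | var x => cases hb; rfl
  | app as _ hI ih =>
    cases hb with
    | app bs hbs hJ =>
      obtain rfl : as = bs := funext fun i => ih i (hbs i)
      exact Option.some.inj (hI.symm.trans hJ)

theorem Eval.inCore {t : Tm F ar Empty} {a : A} (h : Eval I Empty.elim t a) : InCore I a := by
  induction h with
  | var x => exact x.elim
  | app as _ hI ih => exact .mk as ih hI

theorem Eval.eval_subst {β : Y → A} {σ : X → Tm F ar Y} {α : X → A} {u : Tm F ar X} {a : A}
    (hu : Eval I α u a) (hσ : ∀ x ∈ Vars u, Eval I β (σ x) (α x)) :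
    Eval I β (subst σ u) a := by
  induction hu with
  | var x => exact hσ x rfl
  | app as _ hI ih =>
    exact .app as (fun i => ih i fun x hx => hσ x (Set.mem_iUnion.2 ⟨i, hx⟩)) hI

theorem Eval.exists_of_subst {β : Y → A} {σ : X → Tm F ar Y} {u : Tm F ar X} {a : A}
    (h : Eval I β (subst σ u) a) {x : X} (hx : x ∈ Vars u) : ∃ c, Eval I β (σ x) c := by
  induction u generalizing a with
  | var y =>
    obtain rfl : x = y := hx
    exact ⟨a, h⟩
  | app f ts ih =>
    cases h with
    | app as hts _ =>
      obtain ⟨i, hi⟩ := Set.mem_iUnion.1 hx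
      exact ih i (hts i) hi

theorem Eval.of_subst {β : Y → A} {σ : X → Tm F ar Y} {α : X → A} {u : Tm F ar X} {a : A}
    (h : Eval I β (subst σ u) a) (hσ : ∀ x ∈ Vars u, Eval I β (σ x) (α x)) :
    Eval I α u a := by
  induction u generalizing a with
  | var x =>
    rw [h.unique (hσ x rfl)]
    exact .var x
  | app f ts ih =>
    cases h with
    | app as hts hI =>
      exact .app as (fun i => ih i (hts i) fun x hx => hσ x (Set.mem_iUnion.2 ⟨i, hx⟩)) hI

theorem Eval.exists_core_assignment_of_subst {σ : X → Tm F ar Empty} {u : Tm F ar X} {a : A}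
    (h : Eval I Empty.elim (subst σ u) a) :
    ∃ α : X → A, (∀ x, InCore I (α x)) ∧ (∀ x ∈ Vars u, Eval I Empty.elim (σ x) (α x)) ∧
      Eval I α u a := by
  have : ∀ x, ∃ c, InCore I c ∧ (x ∈ Vars u → Eval I Empty.elim (σ x) c) := fun x => by
    by_cases hx : x ∈ Vars u
    · obtain ⟨c, hc⟩ := h.exists_of_subst hx
      exact ⟨c, hc.inCore, fun _ => hc⟩
    · exact ⟨a, h.inCore, fun hx' => absurd hx' hx⟩
  choose α hcore hσ using this
  exact ⟨α, hcore, hσ, h.of_subst hσ⟩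

theorem Rw.exists_eval_ge {ge : A → A → Prop} (hmono : MonoAlg I ge)
    {S : Set (Tm F ar X × Tm F ar X)} (hpm : PartialModel I ge S)
    (hvars : ∀ p ∈ S, Vars p.2 ⊆ Vars p.1) {t s : Tm F ar Empty} (hts : Rw S t s) {a : A}
    (ht : Eval I Empty.elim t a) : ∃ b, Eval I Empty.elim s b ∧ ge a b := by
  induction hts generalizing a with
  | @rule l r hlr σ =>
    obtain ⟨α, -, hσ, hl⟩ := ht.exists_core_assignment_of_subst
    obtain ⟨b, hr, hab⟩ := hpm (l, r) hlr α a hl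
    exact ⟨b, hr.eval_subst fun x hx => hσ x (hvars _ hlr hx), hab⟩
  | ctxt i _ ih =>
    cases ht with
    | app as hts hI =>
      obtain ⟨b, hb, hab⟩ := ih (hts i)
      obtain ⟨c, hc⟩ := Option.isSome_iff_exists.1 ((hmono _).1 as i b hab (by rw [hI]; rfl))
      exact ⟨c, .app _ (forall_update_update hts hb) hc,
        (hmono _).2 as i b a c hab hI hc⟩

theorem exists_eval_of_rw_seq {ge : A → A → Prop} (hmono : MonoAlg I ge)
    {S : Set (Tm F ar X × Tm F ar X)} (hpm : PartialModel I ge S)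
    (hvars : ∀ p ∈ S, Vars p.2 ⊆ Vars p.1) {f : ℕ → Tm F ar Empty}
    (hf : ∀ n, Rw S (f n) (f (n + 1))) (h0 : ∃ a, Eval I Empty.elim (f 0) a) :
    ∀ n, ∃ a, Eval I Empty.elim (f n) a := by
  intro n
  induction n with
  | zero => exact h0
  | succ n ih =>
    obtain ⟨a, ha⟩ := ih
    exact ((hf n).exists_eval_ge hmono hpm hvars ha).imp fun _ => And.left

theorem Rw.notNF_of_eval {S W : Set (Tm F ar X × Tm F ar X)} (hSW : S ⊆ W)
    {t s : Tm F ar Empty} (hts : Rw S t s) {a : A} (ht : Eval I Empty.elim t a) :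
    NotNF I W a := by
  induction hts generalizing a with
  | rule hlr σ =>
    obtain ⟨α, hcore, -, hl⟩ := ht.exists_core_assignment_of_subst
    exact .lhs (hSW hlr) α hcore hl
  | ctxt i _ ih =>
    cases ht with
    | app as hts hI => exact .up as i (fun j => (hts j).inCore) (ih (hts i)) hI

end Evaluation

section Labelling

variable {F X Y A : Type} {ar : F → ℕ} {I : Interp F ar A}

theorem Lab.exists {α : Y → A} {t : Tm F ar Y} {a : A} (h : Eval I α t a) :
    ∃ t', Lab I α t t' := by
  induction h with
  | var x => exact ⟨_, .var x⟩
  | app as hts hI ih =>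
    choose ts' hts' using ih
    exact ⟨_, .app as (by rw [hI]; rfl) ts' hts hts'⟩

theorem Lab.unique {α : Y → A} {t : Tm F ar Y} {t₁ t₂ : Tm (FlabT I) (arLab I) Y}
    (h₁ : Lab I α t t₁) (h₂ : Lab I α t t₂) : t₁ = t₂ := by
  induction h₁ generalizing t₂ with
  | var x => cases h₂; rfl
  | app as _ ts' hev _ ih =>
    cases h₂ with
    | app bs _ us' hev₂ hlab₂ =>
      obtain rfl : as = bs := funext fun i => (hev i).unique (hev₂ i)
      obtain rfl : ts' = us' := funext fun i => ih i (hlab₂ i)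
      rfl

theorem Lab.lab_subst {β : Y → A} {σ : X → Tm F ar Y} {σ' : X → Tm (FlabT I) (arLab I) Y}
    {α : X → A} {u : Tm F ar X} {u' : Tm (FlabT I) (arLab I) X} (hu : Lab I α u u')
    (hσ : ∀ x ∈ Vars u, Eval I β (σ x) (α x)) (hσ' : ∀ x ∈ Vars u, Lab I β (σ x) (σ' x)) :
    Lab I β (subst σ u) (subst σ' u') := by
  induction hu with
  | var x => exact hσ' x rfl
  | app as h ts' hev _ ih =>
    exact .app as h _ (fun i => (hev i).eval_subst fun x hx => hσ x (Set.mem_iUnion.2 ⟨i, hx⟩))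
      (fun i => ih i (fun x hx => hσ x (Set.mem_iUnion.2 ⟨i, hx⟩))
        (fun x hx => hσ' x (Set.mem_iUnion.2 ⟨i, hx⟩)))

end Labelling

section LabelledAlgebra

variable {F X A B : Type} {ar : F → ℕ}

theorem evalT_subst {G Y : Type} {arG : G → ℕ} (J : ∀ g : G, (Fin (arG g) → B) → B) (β : Y → B)
    (σ : X → Tm G arG Y) (u : Tm G arG X) :
    evalT J β (subst σ u) = evalT J (fun x => evalT J β (σ x)) u := by
  induction u with
  | var x => rfl
  | app g ts ih => exact congrArg (J g) (funext ih)

theorem MuMono.reflTransGen {G : Type} {arG : G → ℕ} {J : ∀ g : G, (Fin (arG g) → B) → B}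
    {μ : ∀ g : G, Set (Fin (arG g))} {r : B → B → Prop} (h : MuMono J μ r) :
    MuMono J μ (Relation.ReflTransGen r) := by
  intro g i hi v b hvb
  induction hvb with
  | refl => rw [Function.update_eq_self]
  | tail _ hcd ih =>
    refine ih.tail ?_
    simpa using h g i hi (Function.update v i _) _ (by simpa using hcd)

theorem MuMono.comp {G : Type} {arG : G → ℕ} {J : ∀ g : G, (Fin (arG g) → B) → B}
    {μ : ∀ g : G, Set (Fin (arG g))} {r s : B → B → Prop} (hr : MuMono J μ r)
    (hs : MuMono J μ s) : MuMono J μ (Relation.Comp r s) := by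
  rintro g i hi v b ⟨c, hc, hcb⟩
  exact ⟨_, hr g i hi v c hc, by simpa using hs g i hi (Function.update v i c) b (by simpa using hcb)⟩

variable {I : Interp F ar A}

/-- Condition (3) of the theorem. -/
def MonoInLabels (I : Interp F ar A) (ge : A → A → Prop)
    (J : ∀ p : FlabT I, (Fin (arLab I p) → B) → B) (sq : B → B → Prop) : Prop :=
  ∀ (f : F) (as : Fin (ar f) → A) (i : Fin (ar f)) (a' : A),
    ge (as i) a' →
    ∀ (hd1 : (I f as).isSome)
      (hd2 : (I f (Function.update as i a')).isSome)
      (bs : Fin (ar f) → B),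
      sq (J ⟨⟨f, as⟩, hd1⟩ bs)
         (J ⟨⟨f, Function.update as i a'⟩, hd2⟩ bs)

theorem Rw.exists_lab_rel {ge : A → A → Prop} (hmono : MonoAlg I ge)
    {S W : Set (Tm F ar X × Tm F ar X)} (hSW : S ⊆ W) (hpm : PartialModel I ge W)
    (hvars : ∀ p ∈ W, Vars p.2 ⊆ Vars p.1) {J : ∀ p : FlabT I, (Fin (arLab I p) → B) → B}
    {rel sq : B → B → Prop} (hmodel : TModel J rel (labTRS I S))
    (hmu : MuMono J (nuMap I W) rel) (hrel_sq : ∀ x y z, rel x y → sq y z → rel x z)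
    (hlabels : MonoInLabels I ge J sq) {t s : Tm F ar Empty} (hts : Rw S t s) {a : A}
    {t' : Tm (FlabT I) (arLab I) Empty} (ht : Eval I Empty.elim t a)
    (hlab : Lab I Empty.elim t t') :
    ∃ s', Lab I Empty.elim s s' ∧ rel (evalT J Empty.elim t') (evalT J Empty.elim s') := by
  induction hts generalizing a t' with
  | @rule l r hlr σ =>
    obtain ⟨α, -, hσ, hl⟩ := ht.exists_core_assignment_of_subst
    obtain ⟨b, hr, -⟩ := hpm (l, r) (hSW hlr) α a hl
    obtain ⟨l', hl'⟩ := Lab.exists hl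
    obtain ⟨r', hr'⟩ := Lab.exists hr
    have : ∀ x, ∃ w, x ∈ Vars l → Lab I Empty.elim (σ x) w := fun x => by
      by_cases hx : x ∈ Vars l
      · exact (Lab.exists (hσ x hx)).imp fun _ h _ => h
      · exact ⟨t', fun hx' => absurd hx' hx⟩
    choose σ' hσ' using this
    have hrl : ∀ x ∈ Vars r, x ∈ Vars l := fun x hx => hvars _ (hSW hlr) hx
    obtain rfl := hlab.unique (hl'.lab_subst hσ hσ')
    refine ⟨subst σ' r', hr'.lab_subst (fun x hx => hσ x (hrl x hx))
      (fun x hx => hσ' x (hrl x hx)), ?_⟩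
    rw [evalT_subst, evalT_subst]
    exact hmodel (l', r') ⟨(l, r), hlr, α, ⟨a, hl⟩, hl', hr'⟩ _
  | @ctxt f ts i s₀ hsub ih =>
    cases ht with
    | app as hts hI =>
      cases hlab with
      | app bs hdef ts' hev hlab' =>
        obtain rfl : bs = as := funext fun j => (hev j).unique (hts j)
        obtain ⟨b, hb, hab⟩ := (hsub.mono hSW).exists_eval_ge hmono hpm hvars (hts i)
        obtain ⟨s₀', hs₀', hrel⟩ := ih (hts i) (hlab' i)
        have hdef' := (hmono f).1 bs i b hab hdef
        have hactive : i ∈ nuMap I W ⟨⟨f, bs⟩, hdef⟩ := fun hnf =>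
          hnf.2 (hsub.notNF_of_eval hSW (hts i))
        refine ⟨.app ⟨⟨f, Function.update bs i b⟩, hdef'⟩ (Function.update ts' i s₀'),
          .app _ hdef' _ (forall_update_update hts hb)
            (forall_update_update hlab' hs₀'), ?_⟩
        have hupd : (fun j => evalT J Empty.elim (Function.update ts' i s₀' j)) =
            Function.update (fun j => evalT J Empty.elim (ts' j)) i (evalT J Empty.elim s₀') :=
          funext (Function.apply_update (fun _ => evalT J Empty.elim) ts' i s₀')
        have hlower := hlabels f bs i b hab hdef hdef'
          (Function.update (fun j => evalT J Empty.elim (ts' j)) i (evalT J Empty.elim s₀'))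
        nth_rewrite 2 [← hupd] at hlower
        exact hrel_sq _ _ _ (hmu ⟨⟨f, bs⟩, hdef⟩ i hactive _ _ hrel) hlower

theorem Rw.lab_rel {ge : A → A → Prop} (hmono : MonoAlg I ge)
    {S W : Set (Tm F ar X × Tm F ar X)} (hSW : S ⊆ W) (hpm : PartialModel I ge W)
    (hvars : ∀ p ∈ W, Vars p.2 ⊆ Vars p.1) {J : ∀ p : FlabT I, (Fin (arLab I p) → B) → B}
    {rel sq : B → B → Prop} (hmodel : TModel J rel (labTRS I S))
    (hmu : MuMono J (nuMap I W) rel) (hrel_sq : ∀ x y z, rel x y → sq y z → rel x z)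
    (hlabels : MonoInLabels I ge J sq) {t s : Tm F ar Empty} (hts : Rw S t s) {a : A}
    {t' s' : Tm (FlabT I) (arLab I) Empty} (ht : Eval I Empty.elim t a)
    (hlt : Lab I Empty.elim t t') (hls : Lab I Empty.elim s s') :
    rel (evalT J Empty.elim t') (evalT J Empty.elim s') := by
  obtain ⟨s'', hs'', hrel⟩ :=
    hts.exists_lab_rel hmono hSW hpm hvars hmodel hmu hrel_sq hlabels ht hlt
  rwa [hs''.unique hls] at hrel

end LabelledAlgebra

section RelativeTermination

variable {B : Type}

def ReachesIn (t : B → B → Prop) (P : B → Prop) : ℕ → B → Prop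
  | 0, x => P x
  | n + 1, x => ∃ y, t x y ∧ ReachesIn t P n y

theorem exists_reachesIn_of_reflTransGen {t : B → B → Prop} {P : B → Prop} {x y : B}
    (hxy : Relation.ReflTransGen t x y) (hy : P y) : ∃ n, ReachesIn t P n x := by
  induction hxy using Relation.ReflTransGen.head_induction_on with
  | refl => exact ⟨0, hy⟩
  | head hxz _ ih =>
    obtain ⟨n, hn⟩ := ih
    exact ⟨n + 1, _, hxz, hn⟩

variable {r s : B → B → Prop}

theorem exists_relSeq_of_invariant (P : B → Prop)
    (hP : ∀ x, P x → ∃ y z, Relation.ReflTransGen (fun u v => r u v ∨ s u v) x y ∧ r y z ∧ P z)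
    {x : B} (hx : P x) :
    ∃ f : ℕ → B, f 0 = x ∧ (∀ n, r (f n) (f (n + 1)) ∨ s (f n) (f (n + 1))) ∧
      ∀ m, ∃ n, m ≤ n ∧ r (f n) (f (n + 1)) := by
  -- A state `(k, y)` records that `y` reaches in `k` steps the start of an `r`-step into `P`;
  -- the counter drops at every step that is not forced to be an `r`-step.
  let Inv : ℕ × B → Prop := fun p =>
    ReachesIn (fun u v => r u v ∨ s u v) (fun y => ∃ z, r y z ∧ P z) p.1 p.2
  let Next : ℕ × B → ℕ × B → Prop := fun p q =>
    (r p.2 q.2 ∨ s p.2 q.2) ∧ (p.1 = 0 → r p.2 q.2) ∧ (p.1 ≠ 0 → q.1 < p.1)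
  have hnext : ∀ p, Inv p → ∃ q, Inv q ∧ Next p q := by
    rintro ⟨_ | k, y⟩ hp
    · obtain ⟨z, hyz, hz⟩ := hp
      obtain ⟨y', z', hzy', hy'z', hz'⟩ := hP z hz
      obtain ⟨n, hn⟩ := exists_reachesIn_of_reflTransGen (P := fun y => ∃ z, r y z ∧ P z) hzy'
        ⟨z', hy'z', hz'⟩
      exact ⟨(n, z), hn, Or.inl hyz, fun _ => hyz, fun h => absurd rfl h⟩
    · obtain ⟨y', hyy', hy'⟩ := hp
      exact ⟨(k, y'), hy', hyy', fun h => absurd h k.succ_ne_zero, fun _ => k.lt_succ_self⟩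
  have hnacc : ∀ p, Inv p → ¬ Acc (flip Next) p := fun p hp hacc => by
    induction hacc with
    | intro p _ ih =>
      obtain ⟨q, hq, hpq⟩ := hnext p hp
      exact ih q hpq hq
  obtain ⟨y, z, hxy, hyz, hz⟩ := hP x hx
  obtain ⟨n, hn⟩ :=
    exists_reachesIn_of_reflTransGen (P := fun y => ∃ z, r y z ∧ P z) hxy ⟨z, hyz, hz⟩
  obtain ⟨g, hg0, hg⟩ := not_acc_iff_exists_descending_chain.1 (hnacc (n, x) hn)
  refine ⟨fun k => (g k).2, congrArg Prod.snd hg0, fun k => (hg k).1, fun m => ?_⟩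
  by_contra! hno
  have hdec : ∀ j, (g (m + j)).1 + j ≤ (g m).1 := by
    intro j
    induction j with
    | zero => simp
    | succ j ih =>
      have hne : (g (m + j)).1 ≠ 0 := fun h0 => hno (m + j) (by omega) ((hg (m + j)).2.1 h0)
      have hlt : (g (m + (j + 1))).1 < (g (m + j)).1 := (hg (m + j)).2.2 hne
      omega
  have := hdec ((g m).1 + 1)
  omega

theorem SNrel.not_exists_comp_reflTransGen_seq (hwf : SNrel r s) :
    ¬ ∃ g : ℕ → B, (∀ k, Relation.Comp r (Relation.ReflTransGen s) (g k) (g (k + 1)) ∨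
        Relation.ReflTransGen s (g k) (g (k + 1))) ∧
      ∀ m, ∃ k, m ≤ k ∧ Relation.Comp r (Relation.ReflTransGen s) (g k) (g (k + 1)) := by
  rintro ⟨g, hg, hinf⟩
  have hs {u v : B} (h : Relation.ReflTransGen s u v) :
      Relation.ReflTransGen (fun u v => r u v ∨ s u v) u v :=
    Relation.ReflTransGen.mono (fun _ _ => Or.inr) _ _ h
  have hchain : ∀ ⦃k k'⦄, k ≤ k' →
      Relation.ReflTransGen (fun u v => r u v ∨ s u v) (g k) (g k') :=
    Nat.rel_of_forall_rel_succ_of_le _ fun k =>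
      (hg k).elim (fun ⟨_, hz, hzg⟩ => .head (Or.inl hz) (hs hzg)) hs
  obtain ⟨f, -, hf, hfinf⟩ := exists_relSeq_of_invariant
    (fun x => ∃ k, Relation.ReflTransGen (fun u v => r u v ∨ s u v) x (g k))
    (fun x ⟨k, hxk⟩ => by
      obtain ⟨k', hkk', z, hz, hzg⟩ := hinf k
      exact ⟨g k', z, hxk.trans (hchain hkk'), hz, k' + 1, hs hzg⟩)
    ⟨0, .refl⟩
  exact hwf _ (Set.mem_univ _) ⟨f, rfl, hf, hfinf⟩

end RelativeTermination

theorem snRelOn_defined_of_labelled_algebra {F X A B : Type} {ar : F → ℕ}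
    {R R' : Set (Tm F ar X × Tm F ar X)} {I : Interp F ar A} {ge : A → A → Prop}
    (hmono : MonoAlg I ge) (hpm : PartialModel I ge (R ∪ R'))
    (hvars : ∀ p ∈ R ∪ R', Vars p.2 ⊆ Vars p.1)
    {J : ∀ p : FlabT I, (Fin (arLab I p) → B) → B} {succ sq : B → B → Prop}
    (hwf : SNrel succ sq)
    (hmu1 : MuMono J (nuMap I (R ∪ R')) succ) (hmu2 : MuMono J (nuMap I (R ∪ R')) sq)
    (h1 : TModel J succ (labTRS I R')) (h2 : TModel J sq (labTRS I R))
    (h3 : MonoInLabels I ge J sq) :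
    SNrelOn (Rw R') (Rw R) {t | ∃ a, Eval I Empty.elim t a} := by
  rintro t ht ⟨f, rfl, hstep, hinf⟩
  choose a ha using exists_eval_of_rw_seq hmono hpm hvars
    (fun n => rw_union_iff.2 (hstep n).symm) ht
  choose L hL using fun n => Lab.exists (ha n)
  have hstrict (n : ℕ) (h : Rw R' (f n) (f (n + 1))) : Relation.Comp succ
      (Relation.ReflTransGen sq) (evalT J Empty.elim (L n)) (evalT J Empty.elim (L (n + 1))) :=
    h.lab_rel hmono Set.subset_union_right hpm hvars (fun p hp β => ⟨_, h1 p hp β, .refl⟩)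
      (hmu1.comp hmu2.reflTransGen) (fun _ _ _ ⟨w, hxw, hwy⟩ hyz => ⟨w, hxw, hwy.tail hyz⟩)
      h3 (ha n) (hL n) (hL (n + 1))
  have hweak (n : ℕ) (h : Rw R (f n) (f (n + 1))) :
      Relation.ReflTransGen sq (evalT J Empty.elim (L n)) (evalT J Empty.elim (L (n + 1))) :=
    h.lab_rel hmono Set.subset_union_left hpm hvars (fun p hp β => .single (h2 p hp β))
      hmu2.reflTransGen (fun _ _ _ => .tail) h3 (ha n) (hL n) (hL (n + 1))
  exact hwf.not_exists_comp_reflTransGen_seq ⟨fun n => evalT J Empty.elim (L n),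
    fun n => (hstep n).imp (hstrict n) (hweak n),
    fun m => (hinf m).imp fun n => And.imp_right (hstrict n)⟩

theorem rule_removal_via_partial_model_and_labelled_algebra_general
    {F X : Type} {ar : F → ℕ}
    (R R' U : Set (Tm F ar X × Tm F ar X))
    (hR : IsTRS R) (hR' : IsTRS R') (hU : IsTRS U)
    (T : Set (Tm F ar Empty))
    (hpre : SNrelOn (Rw U) (Rw (R ∪ R')) T)
    {A : Type} (I : Interp F ar A) (ge : A → A → Prop)
    (hmono : MonoAlg I ge)
    (hpm : PartialModel I ge (R ∪ R' ∪ U))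
    (hT : DefinedOn I T)
    {B : Type}
    (J : ∀ p : FlabT I, (Fin (arLab I p) → B) → B)
    (succ sq : B → B → Prop)
    (hwf : SNrel succ sq)
    (hmu1 : MuMono J (nuMap I (R ∪ R')) succ)
    (hmu2 : MuMono J (nuMap I (R ∪ R')) sq)
    (h1 : TModel J succ (labTRS I R'))
    (h2 : TModel J sq (labTRS I R))
    (h3 : ∀ (f : F) (as : Fin (ar f) → A) (i : Fin (ar f)) (a' : A),
        ge (as i) a' →
        ∀ (hd1 : (I f as).isSome)
          (hd2 : (I f (Function.update as i a')).isSome)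
          (bs : Fin (ar f) → B),
          sq (J ⟨⟨f, as⟩, hd1⟩ bs)
             (J ⟨⟨f, Function.update as i a'⟩, hd2⟩ bs)) :
    SNrelOn (Rw (U ∪ R')) (Rw R) T := by
  rintro t ht ⟨f, rfl, hstep, hinf⟩
  have hvars : ∀ p ∈ R ∪ R' ∪ U, Vars p.2 ⊆ Vars p.1 := by
    rintro p ((hp | hp) | hp)
    exacts [(hR p hp).2, (hR' p hp).2, (hU p hp).2]
  have hsteps (n : ℕ) : Rw U (f n) (f (n + 1)) ∨ Rw (R ∪ R') (f n) (f (n + 1)) := by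
    have := hstep n
    simp only [rw_union_iff] at this ⊢
    tauto
  by_cases hUinf : ∀ m, ∃ n, m ≤ n ∧ Rw U (f n) (f (n + 1))
  · exact hpre _ ht ⟨f, rfl, hsteps, hUinf⟩
  push Not at hUinf
  obtain ⟨N, hN⟩ := hUinf
  have hR'step (n : ℕ) (hn : N ≤ n) (h : Rw (U ∪ R') (f n) (f (n + 1))) :
      Rw R' (f n) (f (n + 1)) :=
    (rw_union_iff.1 h).resolve_left (hN n hn)
  have hdef := exists_eval_of_rw_seq hmono hpm hvars
    (fun n => rw_union_iff.2 (hsteps n).symm) (hT _ ht) N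
  refine snRelOn_defined_of_labelled_algebra hmono (fun p hp => hpm p (Or.inl hp))
    (fun p hp => hvars p (Or.inl hp)) hwf hmu1 hmu2 h1 h2 h3 (f N) hdef
    ⟨fun k => f (N + k), rfl, fun k => (hstep (N + k)).imp_left (hR'step _ (by omega)),
      fun m => ?_⟩
  obtain ⟨n, hn, h⟩ := hinf (N + m)
  obtain ⟨k, rfl⟩ := Nat.exists_eq_add_of_le (show N ≤ n by omega)
  exact ⟨k, by omega, hR'step _ (by omega) h⟩

/-- Rule removal via a monotone partial model combined with
an extended well-founded `ν`-monotone algebra on the labelled signature. -/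
theorem rule_removal_via_partial_model_and_labelled_algebra
    {F X : Type} {ar : F → ℕ}
    (R R' U : Set (Tm F ar X × Tm F ar X))
    (hR : IsTRS R) (hR' : IsTRS R') (hU : IsTRS U)
    (T : Set (Tm F ar Empty))
    (hpre : SNrelOn (Rw U) (Rw (R ∪ R')) T)
    {A : Type} [Nonempty A] (I : Interp F ar A) (ge : A → A → Prop)
    (hmono : MonoAlg I ge)
    (hpm : PartialModel I ge (R ∪ R' ∪ U))
    (hT : DefinedOn I T)
    {B : Type} [Nonempty B]
    (J : ∀ p : FlabT I, (Fin (arLab I p) → B) → B)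
    (succ sq : B → B → Prop)
    (hwf : SNrel succ sq)
    (hmu1 : MuMono J (nuMap I (R ∪ R')) succ)
    (hmu2 : MuMono J (nuMap I (R ∪ R')) sq)
    (h1 : TModel J succ (labTRS I R'))
    (h2 : TModel J sq (labTRS I R))
    (h3 : ∀ (f : F) (as : Fin (ar f) → A) (i : Fin (ar f)) (a' : A),
        ge (as i) a' →
        ∀ (hd1 : (I f as).isSome)
          (hd2 : (I f (Function.update as i a')).isSome)
          (bs : Fin (ar f) → B),
          sq (J ⟨⟨f, as⟩, hd1⟩ bs)
             (J ⟨⟨f, Function.update as i a'⟩, hd2⟩ bs)) :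
    SNrelOn (Rw (U ∪ R')) (Rw R) T :=
  rule_removal_via_partial_model_and_labelled_algebra_general R R' U hR hR' hU T hpre I ge hmono hpm
    hT J succ sq hwf hmu1 hmu2 h1 h2 h3

end LocalTerm
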